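/- Assume the model is normal. Then for any F ∈ ℝ^N with 0 < F_i < 1/α for all i, one has Q^α(F) = 0 if and only if F is an equilibrium distribution, i.e., there exist K > 0, b ∈ ℝ^d and c ∈ ℝ such that F_i/Ψ_α(F_i) = K e^{−b·p_i − c|p_i|²} for all i ∈ {1,…,N}. -/

import Mathlib

/-!
Write `Q_i = ∑ Γ_{ij}^{kl} (u - v)` with gain `u = F_k F_l Ψ_i Ψ_j` and loss `v = F_i F_j Ψ_k Ψ_l`.
The symmetries of `Γ` give the H-theorem identity
`∑_i Q_i φ_i = ¼ ∑ Γ_{ij}^{kl} (u - v)(log v - log u)` for `φ = log (F / Ψ)`,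
and every summand is `≤ 0` since `log` is increasing. Hence `Q = 0` forces `u = v` on every
collision, i.e. `log (F / Ψ)` is a collision invariant, and normality turns it into `a + b·p + c|p|²`.
Conversely such an `F` makes every summand of `Q` vanish, by conservation of momentum and energy.
-/

open Real Finset Filter Set

noncomputable def Psi (α y : ℝ) : ℝ :=
  (1 - α * y) ^ α * (1 + (1 - α) * y) ^ (1 - α)

noncomputable def Qop {N : ℕ} (α : ℝ) (Γ : Fin N → Fin N → Fin N → Fin N → ℝ)
    (F : Fin N → ℝ) : Fin N → ℝ := fun i =>
  ∑ j, ∑ k, ∑ l, Γ i j k l *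
    (F k * F l * Psi α (F i) * Psi α (F j) - F i * F j * Psi α (F k) * Psi α (F l))

def dotN {N : ℕ} (u v : Fin N → ℝ) : ℝ := ∑ i, u i * v i

def GammaOK {N d : ℕ} (p : Fin N → Fin d → ℝ)
    (Γ : Fin N → Fin N → Fin N → Fin N → ℝ) : Prop :=
  (∀ i j k l, 0 ≤ Γ i j k l) ∧
  (∀ i j k l, Γ i j k l = Γ j i k l) ∧
  (∀ i j k l, Γ i j k l = Γ k l i j) ∧
  (∀ i j k l, Γ i j k l ≠ 0 →
    (∀ m, p i m + p j m = p k m + p l m) ∧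
    (∑ m, (p i m) ^ 2) + (∑ m, (p j m) ^ 2) = (∑ m, (p k m) ^ 2) + (∑ m, (p l m) ^ 2))

def IsCollInv {N : ℕ} (Γ : Fin N → Fin N → Fin N → Fin N → ℝ) (φ : Fin N → ℝ) : Prop :=
  ∀ i j k l, Γ i j k l ≠ 0 → φ i + φ j = φ k + φ l

def IsNormal {N d : ℕ} (p : Fin N → Fin d → ℝ)
    (Γ : Fin N → Fin N → Fin N → Fin N → ℝ) : Prop :=
  ∀ φ : Fin N → ℝ, IsCollInv Γ φ →
    ∃ (a c : ℝ) (b : Fin d → ℝ), ∀ i, φ i = a + (∑ m, b m * p i m) + c * ∑ m, (p i m) ^ 2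

def IsEquilib {N d : ℕ} (α : ℝ) (p : Fin N → Fin d → ℝ) (P : Fin N → ℝ) : Prop :=
  (∀ i, 0 < P i ∧ P i < 1 / α) ∧
  ∃ (K : ℝ) (b : Fin d → ℝ) (c : ℝ), 0 < K ∧
    ∀ i, P i / Psi α (P i) = K * Real.exp (-(∑ m, b m * p i m) - c * ∑ m, (p i m) ^ 2)

noncomputable def muF (α y : ℝ) : ℝ :=
  y * Real.log y + (1 - α * y) * Real.log (1 - α * y)
    - (1 + (1 - α) * y) * Real.log (1 + (1 - α) * y)

noncomputable def Rfun {N : ℕ} (α : ℝ) (P : Fin N → ℝ) (i : Fin N) : ℝ :=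
  P i * (1 - α * P i) * (1 + (1 - α) * P i)

noncomputable def Pcoef {N : ℕ} (α : ℝ) (P : Fin N → ℝ) (i j k l : Fin N) : ℝ :=
  P i * P j * Psi α (P k) * Psi α (P l) / Real.sqrt (Rfun α P i)

noncomputable def Lop {N : ℕ} (α : ℝ) (Γ : Fin N → Fin N → Fin N → Fin N → ℝ)
    (P : Fin N → ℝ) (f : Fin N → ℝ) : Fin N → ℝ := fun i =>
  ∑ j, ∑ k, ∑ l, Γ i j k l / Real.sqrt (Rfun α P i) *
    (Pcoef α P i j k l * f i + Pcoef α P j i k l * f j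
      - Pcoef α P k l i j * f k - Pcoef α P l k i j * f l)

theorem Psi_pos {α y : ℝ} (hy0 : 0 < y) (hy1 : y < 1 / α) : 0 < Psi α y := by
  have hα : 0 < α := one_div_pos.mp (hy0.trans hy1)
  have h1 : 0 < 1 - α * y := by
    rw [lt_div_iff₀ hα] at hy1
    linarith
  have h2 : 0 < 1 + (1 - α) * y := by nlinarith
  exact mul_pos (rpow_pos_of_pos h1 α) (rpow_pos_of_pos h2 (1 - α))

theorem sub_mul_log_sub_log_pos {u v : ℝ} (hu : 0 < u) (hv : 0 < v) (huv : u ≠ v) :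
    0 < (u - v) * (log u - log v) := by
  rcases huv.lt_or_gt with h | h
  · exact mul_pos_of_neg_of_neg (by linarith) (by linarith [log_lt_log hu h])
  · exact mul_pos (by linarith) (by linarith [log_lt_log hv h])

theorem sub_mul_log_sub_log_nonneg {u v : ℝ} (hu : 0 < u) (hv : 0 < v) :
    0 ≤ (u - v) * (log u - log v) := by
  rcases eq_or_ne u v with rfl | huv
  · simp
  · exact (sub_mul_log_sub_log_pos hu hv huv).le

theorem sum_mul_collision_eq {ι R : Type*} [Fintype ι] [CommRing R]
    (G : ι → ι → ι → ι → R) (hswap : ∀ i j k l, G j i k l = G i j k l)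
    (hanti : ∀ i j k l, G k l i j = -G i j k l) (φ : ι → R) :
    ∑ i, ∑ j, ∑ k, ∑ l, G i j k l * (φ i + φ j - φ k - φ l)
      = 4 * ∑ i, ∑ j, ∑ k, ∑ l, G i j k l * φ i := by
  have sum_congr₄ {f g : ι → ι → ι → ι → R} (h : ∀ i j k l, f i j k l = g i j k l) :
      ∑ i, ∑ j, ∑ k, ∑ l, f i j k l = ∑ i, ∑ j, ∑ k, ∑ l, g i j k l := by
    simp only [h]
  have swap_ij (f : ι → ι → ι → ι → R) :
      ∑ i, ∑ j, ∑ k, ∑ l, f i j k l = ∑ i, ∑ j, ∑ k, ∑ l, f j i k l :=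
    Finset.sum_comm
  have swap_pairs (f : ι → ι → ι → ι → R) :
      ∑ i, ∑ j, ∑ k, ∑ l, f i j k l = ∑ i, ∑ j, ∑ k, ∑ l, f k l i j := by
    calc ∑ i, ∑ j, ∑ k, ∑ l, f i j k l = ∑ a : ι × ι, ∑ b : ι × ι, f a.1 a.2 b.1 b.2 := by
          simp only [Fintype.sum_prod_type]
      _ = ∑ b : ι × ι, ∑ a : ι × ι, f a.1 a.2 b.1 b.2 := Finset.sum_comm
      _ = ∑ i, ∑ j, ∑ k, ∑ l, f k l i j := by simp only [Fintype.sum_prod_type]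
  have hj : ∑ i, ∑ j, ∑ k, ∑ l, G i j k l * φ j = ∑ i, ∑ j, ∑ k, ∑ l, G i j k l * φ i := by
    rw [swap_ij]
    exact sum_congr₄ fun i j k l => by rw [hswap]
  have hk : ∑ i, ∑ j, ∑ k, ∑ l, G i j k l * φ k = -∑ i, ∑ j, ∑ k, ∑ l, G i j k l * φ i := by
    rw [swap_pairs]
    simp only [← sum_neg_distrib]
    exact sum_congr₄ fun i j k l => by rw [hanti, neg_mul]
  have hl : ∑ i, ∑ j, ∑ k, ∑ l, G i j k l * φ l = -∑ i, ∑ j, ∑ k, ∑ l, G i j k l * φ i := by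
    rw [swap_pairs, ← hj]
    simp only [← sum_neg_distrib]
    exact sum_congr₄ fun i j k l => by rw [hanti, neg_mul]
  simp only [mul_add, mul_sub, sum_add_distrib, sum_sub_distrib, hj, hk, hl]
  ring

theorem sum₄_eq_zero_iff_of_nonneg {ι M : Type*} [Fintype ι] [AddCommMonoid M] [PartialOrder M]
    [AddLeftMono M] {f : ι → ι → ι → ι → M} (hf : ∀ i j k l, 0 ≤ f i j k l) :
    ∑ i, ∑ j, ∑ k, ∑ l, f i j k l = 0 ↔ ∀ i j k l, f i j k l = 0 := by
  have h₃ (i j k : ι) : 0 ≤ ∑ l, f i j k l := sum_nonneg fun l _ => hf i j k l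
  have h₂ (i j : ι) : 0 ≤ ∑ k, ∑ l, f i j k l := sum_nonneg fun k _ => h₃ i j k
  have h₁ (i : ι) : 0 ≤ ∑ j, ∑ k, ∑ l, f i j k l := sum_nonneg fun j _ => h₂ i j
  simp only [Fintype.sum_eq_zero_iff_of_nonneg h₁, Fintype.sum_eq_zero_iff_of_nonneg (h₂ _),
    Fintype.sum_eq_zero_iff_of_nonneg (h₃ _ _), Fintype.sum_eq_zero_iff_of_nonneg (hf _ _ _),
    funext_iff, Pi.zero_apply]

theorem log_div_add_log_div_sub_log_div_sub_log_div {a b c d e f g h : ℝ}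
    (ha : 0 < a) (hb : 0 < b) (hc : 0 < c) (hd : 0 < d)
    (he : 0 < e) (hf : 0 < f) (hg : 0 < g) (hh : 0 < h) :
    log (a / e) + log (b / f) - log (c / g) - log (d / h)
      = log (a * b * g * h) - log (c * d * e * f) := by
  simp only [log_div, log_mul, ha.ne', hb.ne', hc.ne', hd.ne', he.ne', hf.ne', hg.ne', hh.ne',
    ne_eq, mul_ne_zero_iff, not_false_eq_true, and_self]
  ring

def collisionOp {ι : Type*} [Fintype ι] (Γ : ι → ι → ι → ι → ℝ) (x y : ι → ℝ) (i : ι) : ℝ :=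
  ∑ j, ∑ k, ∑ l, Γ i j k l * (x k * x l * y i * y j - x i * x j * y k * y l)

theorem collisionOp_eq_zero_iff {ι : Type*} [Fintype ι] {Γ : ι → ι → ι → ι → ℝ} {x y : ι → ℝ}
    (hΓ : ∀ i j k l, 0 ≤ Γ i j k l) (hswap : ∀ i j k l, Γ i j k l = Γ j i k l)
    (hpair : ∀ i j k l, Γ i j k l = Γ k l i j) (hx : ∀ i, 0 < x i) (hy : ∀ i, 0 < y i) :
    collisionOp Γ x y = 0 ↔
      ∀ i j k l, Γ i j k l ≠ 0 → x i * x j * y k * y l = x k * x l * y i * y j := by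
  set G : ι → ι → ι → ι → ℝ := fun i j k l =>
    Γ i j k l * (x k * x l * y i * y j - x i * x j * y k * y l) with hG
  have hpos (i j k l : ι) : 0 < x i * x j * y k * y l := by
    have := hx i; have := hx j; have := hy k; have := hy l; positivity
  constructor
  · intro hQ
    set φ : ι → ℝ := fun i => log (x i / y i)
    have hweak : ∑ i, ∑ j, ∑ k, ∑ l, G i j k l * φ i = 0 := by
      simp only [← sum_mul]
      refine sum_eq_zero fun i _ => ?_
      rw [show ∑ j, ∑ k, ∑ l, G i j k l = 0 from congrFun hQ i, zero_mul]
    have hH : ∑ i, ∑ j, ∑ k, ∑ l, Γ i j k l * ((x k * x l * y i * y j - x i * x j * y k * y l) *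
        (log (x k * x l * y i * y j) - log (x i * x j * y k * y l))) = 0 := by
      have := sum_mul_collision_eq G (fun i j k l => by simp only [hG]; rw [hswap]; ring)
        (fun i j k l => by simp only [hG]; rw [hpair]; ring) φ
      rw [hweak, mul_zero, ← neg_eq_zero, ← sum_neg_distrib] at this
      rw [← this]
      refine sum_congr rfl fun i _ => ?_
      simp only [← sum_neg_distrib]
      refine sum_congr rfl fun j _ => sum_congr rfl fun k _ => sum_congr rfl fun l _ => ?_
      rw [log_div_add_log_div_sub_log_div_sub_log_div (hx i) (hx j) (hx k) (hx l)
        (hy i) (hy j) (hy k) (hy l)]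
      ring
    rw [sum₄_eq_zero_iff_of_nonneg fun i j k l =>
      mul_nonneg (hΓ i j k l) (sub_mul_log_sub_log_nonneg (hpos k l i j) (hpos i j k l))] at hH
    intro i j k l hΓijkl
    by_contra hne
    have := sub_mul_log_sub_log_pos (hpos k l i j) (hpos i j k l) (Ne.symm hne)
    exact (mul_pos ((hΓ i j k l).lt_of_ne' hΓijkl) this).ne' (hH i j k l)
  · intro hcoll
    funext i
    refine sum_eq_zero fun j _ => sum_eq_zero fun k _ => sum_eq_zero fun l _ => ?_
    rcases eq_or_ne (Γ i j k l) 0 with h0 | hne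
    · rw [h0, zero_mul]
    · rw [hcoll i j k l hne, sub_self, mul_zero]

theorem isCollInv_log_div_iff {N : ℕ} {Γ : Fin N → Fin N → Fin N → Fin N → ℝ} {x y : Fin N → ℝ}
    (hx : ∀ i, 0 < x i) (hy : ∀ i, 0 < y i) :
    IsCollInv Γ (fun i => log (x i / y i)) ↔
      ∀ i j k l, Γ i j k l ≠ 0 → x i * x j * y k * y l = x k * x l * y i * y j := by
  have hpos (i j k l : Fin N) : 0 < x i * x j * y k * y l := by
    have := hx i; have := hx j; have := hy k; have := hy l; positivity
  refine forall₄_congr fun i j k l => imp_congr_right fun _ => ?_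
  rw [← sub_eq_zero, sub_add_eq_sub_sub, log_div_add_log_div_sub_log_div_sub_log_div (hx i) (hx j)
    (hx k) (hx l) (hy i) (hy j) (hy k) (hy l), sub_eq_zero]
  exact log_injOn_pos.eq_iff (hpos i j k l) (hpos k l i j)

theorem isCollInv_add_sum_mul_add_mul_sum_sq {N d : ℕ} {p : Fin N → Fin d → ℝ}
    {Γ : Fin N → Fin N → Fin N → Fin N → ℝ}
    (hcons : ∀ i j k l, Γ i j k l ≠ 0 → (∀ m, p i m + p j m = p k m + p l m) ∧
      (∑ m, p i m ^ 2) + (∑ m, p j m ^ 2) = (∑ m, p k m ^ 2) + (∑ m, p l m ^ 2))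
    (a c : ℝ) (b : Fin d → ℝ) :
    IsCollInv Γ (fun i => a + (∑ m, b m * p i m) + c * ∑ m, p i m ^ 2) := by
  intro i j k l hne
  obtain ⟨hmomentum, henergy⟩ := hcons i j k l hne
  have hb : (∑ m, b m * p i m) + (∑ m, b m * p j m) = (∑ m, b m * p k m) + ∑ m, b m * p l m := by
    simp only [← sum_add_distrib, ← mul_add, hmomentum]
  linear_combination hb + c * henergy

theorem isCollInv_log_iff_exists_exp {N d : ℕ} {p : Fin N → Fin d → ℝ}
    {Γ : Fin N → Fin N → Fin N → Fin N → ℝ}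
    (hcons : ∀ i j k l, Γ i j k l ≠ 0 → (∀ m, p i m + p j m = p k m + p l m) ∧
      (∑ m, p i m ^ 2) + (∑ m, p j m ^ 2) = (∑ m, p k m ^ 2) + (∑ m, p l m ^ 2))
    (hnorm : IsNormal p Γ) {g : Fin N → ℝ} (hg : ∀ i, 0 < g i) :
    IsCollInv Γ (fun i => log (g i)) ↔
      ∃ (K : ℝ) (b : Fin d → ℝ) (c : ℝ), 0 < K ∧
        ∀ i, g i = K * exp (-(∑ m, b m * p i m) - c * ∑ m, p i m ^ 2) := by
  constructor
  · intro hinv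
    obtain ⟨a, c, b, hlog⟩ := hnorm _ hinv
    refine ⟨exp a, -b, -c, exp_pos a, fun i => ?_⟩
    rw [← exp_log (hg i), hlog i, ← exp_add]
    congr 1
    simp only [Pi.neg_apply, neg_mul, sum_neg_distrib]
    ring
  · rintro ⟨K, b, c, hK, hmaxwell⟩
    convert isCollInv_add_sum_mul_add_mul_sum_sq hcons (log K) (-c) (-b) using 2 with i
    rw [hmaxwell i, log_mul hK.ne' (exp_pos _).ne', log_exp]
    simp only [Pi.neg_apply, neg_mul, sum_neg_distrib]
    ring

theorem stmt3_general {N d : ℕ} (α : ℝ)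
    (p : Fin N → Fin d → ℝ) (Γ : Fin N → Fin N → Fin N → Fin N → ℝ)
    (hΓ : GammaOK p Γ) (hnorm : IsNormal p Γ)
    (F : Fin N → ℝ) (hF : ∀ i, 0 < F i ∧ F i < 1 / α) :
    Qop α Γ F = 0 ↔
      ∃ (K : ℝ) (b : Fin d → ℝ) (c : ℝ), 0 < K ∧
        ∀ i, F i / Psi α (F i)
          = K * Real.exp (-(∑ m, b m * p i m) - c * ∑ m, (p i m) ^ 2) := by
  obtain ⟨hΓ0, hswap, hpair, hcons⟩ := hΓ
  have hF0 (i : Fin N) : 0 < F i := (hF i).1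
  have hΨ (i : Fin N) : 0 < Psi α (F i) := Psi_pos (hF i).1 (hF i).2
  rw [show Qop α Γ F = collisionOp Γ F (fun i => Psi α (F i)) from rfl,
    collisionOp_eq_zero_iff hΓ0 hswap hpair hF0 hΨ, ← isCollInv_log_div_iff hF0 hΨ,
    isCollInv_log_iff_exists_exp hcons hnorm fun i => div_pos (hF0 i) (hΨ i)]

/-- for normal models, `Q^α(F) = 0` iff `F` is an equilibrium distribution. -/
theorem stmt3 {N d : ℕ} (hN : 0 < N) (hd : 0 < d)
    (α : ℝ) (hα0 : 0 < α) (hα1 : α < 1)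
    (p : Fin N → Fin d → ℝ) (Γ : Fin N → Fin N → Fin N → Fin N → ℝ)
    (hΓ : GammaOK p Γ) (hnorm : IsNormal p Γ)
    (F : Fin N → ℝ) (hF : ∀ i, 0 < F i ∧ F i < 1 / α) :
    Qop α Γ F = 0 ↔
      ∃ (K : ℝ) (b : Fin d → ℝ) (c : ℝ), 0 < K ∧
        ∀ i, F i / Psi α (F i)
          = K * Real.exp (-(∑ m, b m * p i m) - c * ∑ m, (p i m) ^ 2) :=
  stmt3_general α p Γ hΓ hnorm F hF
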